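/- There exists a simple graph on 19 vertices that does not contain the complete bipartite graph K_{3,5} as a (not necessarily induced) subgraph and whose complement does not contain the complete bipartite graph K_{2,5} as a (not necessarily induced) subgraph. -/

import Mathlib

open SimpleGraph

/-- `ContainsCopy G H` means the graph `H` contains a copy of `G` as a
(not necessarily induced) subgraph. -/
def ContainsCopy {α β : Type*} (G : SimpleGraph α) (H : SimpleGraph β) : Prop :=
  ∃ f : α → β, Function.Injective f ∧ ∀ ⦃u v : α⦄, G.Adj u v → H.Adj (f u) (f v)

/-- The join `G + H` of two graphs: take disjoint copies of `G` and `H` and add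
all edges between them. -/
def graphJoin {α β : Type*} (G : SimpleGraph α) (H : SimpleGraph β) :
    SimpleGraph (α ⊕ β) where
  Adj u v :=
    match u, v with
    | .inl a, .inl b => G.Adj a b
    | .inr a, .inr b => H.Adj a b
    | .inl _, .inr _ => True
    | .inr _, .inl _ => True
  symm := by
    constructor
    intro u v h
    cases u <;> cases v <;> simp_all <;> exact h.symm
  loopless := by
    constructor
    intro u
    cases u <;> simp

/-- The wheel `W n`: the join of a single vertex with a cycle on `n - 1` vertices. -/
def wheelGraph (n : ℕ) : SimpleGraph (Fin 1 ⊕ Fin (n - 1)) :=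
  graphJoin (⊥ : SimpleGraph (Fin 1)) (cycleGraph (n - 1))

/-- The book `B n`: the join of an edge `K₂` with an empty graph on `n` vertices. -/
def bookGraph (n : ℕ) : SimpleGraph (Fin 2 ⊕ Fin n) :=
  graphJoin (⊤ : SimpleGraph (Fin 2)) (⊥ : SimpleGraph (Fin n))

/-- The two-colour graph Ramsey number `R(G₁, G₂)`: the least `n` such that every
simple graph `G` on `n` vertices contains a copy of `G₁`, or its complement
contains a copy of `G₂`. -/
noncomputable def ramseyNumber {α β : Type*} (G₁ : SimpleGraph α) (G₂ : SimpleGraph β) : ℕ :=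
  sInf {n : ℕ | ∀ G : SimpleGraph (Fin n), ContainsCopy G₁ G ∨ ContainsCopy G₂ Gᶜ}


def sb : ℕ → Bool
  | 1 | 2 | 3 | 5 | 9 | 10 | 14 | 16 | 17 | 18 => true
  | _ => false

def G19 : SimpleGraph (Fin 19) where
  Adj u v := sb ((u.1 + 19 - v.1) % 19) = true
  symm := ⟨fun u v h => by revert h; revert u v; decide⟩
  loopless := ⟨fun u => by revert u; decide⟩

instance : DecidableRel G19.Adj := fun u v =>
  inferInstanceAs (Decidable (sb ((u.1 + 19 - v.1) % 19) = true))

set_option maxHeartbeats 4000000 in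
lemma key3 : ∀ a b c : Fin 19, a ≠ b → a ≠ c → b ≠ c →
    (Finset.univ.filter (fun v => G19.Adj a v ∧ G19.Adj b v ∧ G19.Adj c v)).card ≤ 4 := by
  decide

set_option maxHeartbeats 4000000 in
lemma key2 : ∀ a b : Fin 19, a ≠ b →
    (Finset.univ.filter (fun v => G19ᶜ.Adj a v ∧ G19ᶜ.Adj b v)).card ≤ 4 := by
  decide

/-- There is a simple graph on 19 vertices not containing `K_{3,5}` as a
subgraph, whose complement does not contain `K_{2,5}` as a subgraph. -/
theorem exists_critical_graph_K25_K35 :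
    ∃ G : SimpleGraph (Fin 19),
      ¬ ContainsCopy (completeBipartiteGraph (Fin 3) (Fin 5)) G ∧
      ¬ ContainsCopy (completeBipartiteGraph (Fin 2) (Fin 5)) Gᶜ := by
  refine ⟨G19, ?_, ?_⟩
  · rintro ⟨f, hf, hm⟩
    have hd : ∀ i j : Fin 3, i ≠ j → f (.inl i) ≠ f (.inl j) :=
      fun i j h e => h (Sum.inl.inj (hf e))
    have h1 := key3 _ _ _ (hd 0 1 (by decide)) (hd 0 2 (by decide)) (hd 1 2 (by decide))
    have hsub : (Finset.univ.image (fun j : Fin 5 => f (.inr j))) ⊆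
        Finset.univ.filter (fun v => G19.Adj (f (.inl 0)) v ∧ G19.Adj (f (.inl 1)) v ∧
          G19.Adj (f (.inl 2)) v) := by
      intro v hv
      simp only [Finset.mem_image] at hv
      obtain ⟨j, _, rfl⟩ := hv
      refine Finset.mem_filter.2 ⟨Finset.mem_univ _, hm ?_, hm ?_, hm ?_⟩ <;> simp
    have hcard : (Finset.univ.image (fun j : Fin 5 => f (.inr j))).card = 5 := by
      rw [Finset.card_image_of_injective _ (fun i j h => Sum.inr.inj (hf h))]
      simp
    have := Finset.card_le_card hsub
    omega
  · rintro ⟨f, hf, hm⟩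
    have hd : f (.inl 0) ≠ f (.inl 1) := fun e =>
      (by decide : (0 : Fin 2) ≠ 1) (Sum.inl.inj (hf e))
    have h1 := key2 _ _ hd
    have hsub : (Finset.univ.image (fun j : Fin 5 => f (.inr j))) ⊆
        Finset.univ.filter (fun v => G19ᶜ.Adj (f (.inl 0)) v ∧ G19ᶜ.Adj (f (.inl 1)) v) := by
      intro v hv
      simp only [Finset.mem_image] at hv
      obtain ⟨j, _, rfl⟩ := hv
      refine Finset.mem_filter.2 ⟨Finset.mem_univ _, hm ?_, hm ?_⟩ <;> simp
    have hcard : (Finset.univ.image (fun j : Fin 5 => f (.inr j))).card = 5 := by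
      rw [Finset.card_image_of_injective _ (fun i j h => Sum.inr.inj (hf h))]
      simp
    have := Finset.card_le_card hsub
    omega
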